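/- The degenerate Bell polynomials satisfy φ_{n+1,λ}(x) = x ∑_{k=0}^{n} C(n,k) (1-λ)_{n-k,λ} φ_{k,λ}(x) for all n ≥ 0 and all real x. -/

import Mathlib

open Finset

/-- Generalized falling factorial `(x)_{n,lam} = x(x-lam)...(x-(n-1)lam)`. -/
noncomputable def dfall (lam x : ℝ) (n : ℕ) : ℝ := ∏ i ∈ Finset.range n, (x - i * lam)

/-- Generalized rising factorial `⟨x⟩_{n,lam} = x(x+lam)...(x+(n-1)lam)`. -/
noncomputable def drise (lam x : ℝ) (n : ℕ) : ℝ := ∏ i ∈ Finset.range n, (x + i * lam)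

lemma dfall_zero (lam x : ℝ) : dfall lam x 0 = 1 := by simp [dfall]

lemma dfall_succ (lam x : ℝ) (n : ℕ) : dfall lam x (n+1) = dfall lam x n * (x - n * lam) := by
  simp [dfall, Finset.prod_range_succ]

lemma dfall_one_nat_eq_zero {j m : ℕ} (h : j < m) : dfall 1 (j:ℝ) m = 0 := by
  apply Finset.prod_eq_zero (Finset.mem_range.2 h); simp

lemma dfall_one_self_ne_zero (k : ℕ) : dfall 1 (k:ℝ) k ≠ 0 := by
  apply Finset.prod_ne_zero_iff.2
  intro i hi
  have h : (i:ℝ) < k := by exact_mod_cast Finset.mem_range.1 hi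
  intro hc
  simp only [mul_one] at hc
  linarith

lemma coeff_unique {N : ℕ} {a : ℕ → ℝ}
    (h : ∀ x : ℝ, ∑ k ∈ Finset.range N, a k * dfall 1 x k = 0) :
    ∀ k < N, a k = 0 := by
  intro k
  induction k using Nat.strong_induction_on with
  | _ k ih =>
    intro hk
    have h1 := h (k:ℝ)
    rw [Finset.sum_eq_single k] at h1
    · exact (mul_eq_zero.1 h1).resolve_right (dfall_one_self_ne_zero k)
    · intro m hm hne
      rcases lt_or_gt_of_ne hne with hlt | hgt
      · rw [ih m hlt (lt_trans hlt hk), zero_mul]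
      · rw [dfall_one_nat_eq_zero hgt, mul_zero]
    · intro hk'; exact absurd (Finset.mem_range.2 hk) hk'

/-- `S` extended by zero above the diagonal. -/
noncomputable def Saux (S : ℕ → ℕ → ℝ) (n k : ℕ) : ℝ := if k ≤ n then S n k else 0

lemma Saux_eq_zero (S : ℕ → ℕ → ℝ) {n k : ℕ} (h : n < k) : Saux S n k = 0 := by
  simp [Saux, Nat.not_le.2 h]

section
variable {lam : ℝ} {S : ℕ → ℕ → ℝ}
variable (hS : ∀ (n : ℕ) (x : ℝ), dfall lam x n = ∑ k ∈ Finset.range (n + 1), S n k * dfall 1 x k)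
include hS

lemma hSaux : ∀ (n : ℕ) (x : ℝ),
    dfall lam x n = ∑ k ∈ Finset.range (n + 1), Saux S n k * dfall 1 x k := by
  intro n x
  rw [hS n x]
  refine Finset.sum_congr rfl fun k hk => ?_
  have hkn : k ≤ n := Nat.lt_succ_iff.1 (Finset.mem_range.1 hk)
  simp [Saux, hkn]

lemma Saux_zero_zero : Saux S 0 0 = 1 := by
  have := hS 0 0
  simp [dfall_zero, dfall] at this
  simp [Saux, this]

lemma Saux_rec (n k : ℕ) :
    Saux S (n+1) k = (if k = 0 then 0 else Saux S n (k-1)) + ((k:ℝ) - n * lam) * Saux S n k := by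
  by_cases hk : k < n + 2
  · -- use uniqueness
    set B : ℕ → ℝ := fun k => (if k = 0 then 0 else Saux S n (k-1)) + ((k:ℝ) - n * lam) * Saux S n k with hB
    have key : ∀ x : ℝ, ∑ m ∈ Finset.range (n+2), (Saux S (n+1) m - B m) * dfall 1 x m = 0 := by
      intro x
      have e1 : ∑ m ∈ Finset.range (n+2), Saux S (n+1) m * dfall 1 x m = dfall lam x (n+1) :=
        (hSaux hS (n+1) x).symm
      have e2 : ∑ m ∈ Finset.range (n+2), B m * dfall 1 x m = dfall lam x (n+1) := by
        have split : ∀ m, B m * dfall 1 x m =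
            (if m = 0 then 0 else Saux S n (m-1)) * dfall 1 x m
              + ((m:ℝ) - n * lam) * Saux S n m * dfall 1 x m := by
          intro m; rw [hB]; ring
        rw [Finset.sum_congr rfl fun m _ => split m, Finset.sum_add_distrib]
        have p1 : ∑ m ∈ Finset.range (n+2),
            (if m = 0 then 0 else Saux S n (m-1)) * dfall 1 x m
            = ∑ i ∈ Finset.range (n+1), Saux S n i * dfall 1 x (i+1) := by
          rw [Finset.sum_range_succ']
          simp
        have p2 : ∑ m ∈ Finset.range (n+2), ((m:ℝ) - n * lam) * Saux S n m * dfall 1 x m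
            = ∑ m ∈ Finset.range (n+1), ((m:ℝ) - n * lam) * Saux S n m * dfall 1 x m := by
          rw [Finset.sum_range_succ, Saux_eq_zero S (Nat.lt_succ_self n)]
          simp
        rw [p1, p2, ← Finset.sum_add_distrib]
        have p3 : ∀ i, Saux S n i * dfall 1 x (i+1)
            + ((i:ℝ) - n * lam) * Saux S n i * dfall 1 x i
            = (Saux S n i * dfall 1 x i) * (x - n * lam) := by
          intro i
          rw [dfall_succ]
          ring
        rw [Finset.sum_congr rfl fun i _ => p3 i, ← Finset.sum_mul, ← hSaux hS n x,
          dfall_succ]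
      calc ∑ m ∈ Finset.range (n+2), (Saux S (n+1) m - B m) * dfall 1 x m
          = ∑ m ∈ Finset.range (n+2), (Saux S (n+1) m * dfall 1 x m - B m * dfall 1 x m) := by
            refine Finset.sum_congr rfl fun m _ => by ring
        _ = 0 := by rw [Finset.sum_sub_distrib, e1, e2]; ring
    have := coeff_unique key k hk
    simp only [hB] at this
    linarith [this]
  · -- trivial: both sides zero
    push_neg at hk
    have h1 : Saux S (n+1) k = 0 := Saux_eq_zero S (by omega)
    have h2 : Saux S n k = 0 := Saux_eq_zero S (by omega)
    have h3 : Saux S n (k-1) = 0 := Saux_eq_zero S (by omega)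
    have h4 : k ≠ 0 := by omega
    simp [h1, h2, h3, h4]

end

section
variable {lam : ℝ} {S : ℕ → ℕ → ℝ}
variable (hS00 : Saux S 0 0 = 1)
variable (hrec : ∀ n k : ℕ, Saux S (n+1) k
    = (if k = 0 then 0 else Saux S n (k-1)) + ((k:ℝ) - n * lam) * Saux S n k)
include hrec

lemma Saux_col0 : ∀ n : ℕ, Saux S (n+1) 0 = 0 := by
  intro n
  induction n with
  | zero => rw [hrec]; simp
  | succ m ih => rw [hrec]; simp [ih]

include hS00 in
lemma col0_sum (n : ℕ) :
    ∑ k ∈ Finset.range (n+1), (n.choose k : ℝ) * dfall lam (1-lam) (n-k) * Saux S k 0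
      = dfall lam (1-lam) n := by
  rw [Finset.sum_eq_single 0]
  · simp [hS00]
  · intro m _ hm
    obtain ⟨i, rfl⟩ := Nat.exists_eq_succ_of_ne_zero hm
    rw [Saux_col0 hrec, mul_zero]
  · intro h; exact absurd (Finset.mem_range.2 (Nat.succ_pos n)) h

include hS00 in
lemma keyT : ∀ (n j : ℕ),
    ∑ k ∈ Finset.range (n+1), (n.choose k : ℝ) * dfall lam (1-lam) (n-k) * Saux S k j
      = Saux S (n+1) (j+1) := by
  intro n
  induction n with
  | zero =>
    intro j
    rw [hrec]
    simp [Saux_eq_zero S (Nat.succ_pos j)]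
    simp [dfall]
  | succ n ih =>
    intro j
    match j with
    | 0 =>
      have l1 := col0_sum hS00 hrec n
      have l2 := col0_sum hS00 hrec (n+1)
      rw [l2, hrec]
      rw [show (1:ℕ) - 1 = 0 from rfl, Saux_col0 hrec, ← ih 0, l1, dfall_succ]
      have h1 : ((1:ℕ):ℝ) = 1 := by norm_num
      simp only [if_neg (one_ne_zero), h1]
      push_cast
      ring
    | j' + 1 =>
      -- LHS = P + Q
      have hQ : ∑ m ∈ Finset.range (n+1),
            (n.choose m : ℝ) * dfall lam (1-lam) (n+1-m) * Saux S m (j'+1)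
          = ∑ i ∈ Finset.range (n+1),
            (n.choose (i+1) : ℝ) * dfall lam (1-lam) (n-i) * Saux S (i+1) (j'+1) := by
        have e1 : ∑ m ∈ Finset.range (n+2),
              (n.choose m : ℝ) * dfall lam (1-lam) (n+1-m) * Saux S m (j'+1)
            = ∑ m ∈ Finset.range (n+1),
              (n.choose m : ℝ) * dfall lam (1-lam) (n+1-m) * Saux S m (j'+1) := by
          rw [Finset.sum_range_succ, Nat.choose_succ_self]
          simp
        have e2 : ∑ m ∈ Finset.range (n+2),
              (n.choose m : ℝ) * dfall lam (1-lam) (n+1-m) * Saux S m (j'+1)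
            = ∑ i ∈ Finset.range (n+1),
              (n.choose (i+1) : ℝ) * dfall lam (1-lam) (n-i) * Saux S (i+1) (j'+1) := by
          rw [Finset.sum_range_succ']
          rw [Saux_eq_zero S (Nat.succ_pos j')]
          simp [Nat.succ_sub_succ]
        rw [← e1, e2]
      have hL : ∑ k ∈ Finset.range (n+2),
            ((n+1).choose k : ℝ) * dfall lam (1-lam) (n+1-k) * Saux S k (j'+1)
          = ∑ i ∈ Finset.range (n+1),
              (n.choose i : ℝ) * dfall lam (1-lam) (n-i) * Saux S (i+1) (j'+1)
            + ∑ m ∈ Finset.range (n+1),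
              (n.choose m : ℝ) * dfall lam (1-lam) (n+1-m) * Saux S m (j'+1) := by
        rw [hQ, ← Finset.sum_add_distrib, Finset.sum_range_succ']
        rw [Saux_eq_zero S (Nat.succ_pos j')]
        simp only [Nat.succ_sub_succ, mul_zero, add_zero]
        refine Finset.sum_congr rfl fun i _ => ?_
        rw [Nat.choose_succ_succ]
        push_cast
        ring
      rw [hL]
      -- expand Saux (i+1) (j'+1) and dfall (n+1-m)
      have hP : ∑ i ∈ Finset.range (n+1),
            (n.choose i : ℝ) * dfall lam (1-lam) (n-i) * Saux S (i+1) (j'+1)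
          = ∑ i ∈ Finset.range (n+1),
              ((n.choose i : ℝ) * dfall lam (1-lam) (n-i) * Saux S i j'
               + ((j':ℝ) + 1 - i * lam) * ((n.choose i : ℝ) * dfall lam (1-lam) (n-i) * Saux S i (j'+1))) := by
        refine Finset.sum_congr rfl fun i _ => ?_
        rw [hrec]
        simp only [Nat.add_sub_cancel, if_neg (Nat.succ_ne_zero j')]
        push_cast
        ring
      have hQ2 : ∑ m ∈ Finset.range (n+1),
            (n.choose m : ℝ) * dfall lam (1-lam) (n+1-m) * Saux S m (j'+1)
          = ∑ m ∈ Finset.range (n+1),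
              (1 - lam - ((n:ℝ) - m) * lam) * ((n.choose m : ℝ) * dfall lam (1-lam) (n-m) * Saux S m (j'+1)) := by
        refine Finset.sum_congr rfl fun m hm => ?_
        have hmn : m ≤ n := Nat.lt_succ_iff.1 (Finset.mem_range.1 hm)
        rw [show n + 1 - m = (n - m) + 1 from by omega, dfall_succ]
        have : ((n - m : ℕ) : ℝ) = (n:ℝ) - m := by
          push_cast [Nat.cast_sub hmn]; ring
        rw [this]
        ring
      rw [hP, hQ2, Finset.sum_add_distrib, add_assoc, ← Finset.sum_add_distrib]
      have hcomb : ∀ i ∈ Finset.range (n+1),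
          ((j':ℝ) + 1 - i * lam) * ((n.choose i : ℝ) * dfall lam (1-lam) (n-i) * Saux S i (j'+1))
            + (1 - lam - ((n:ℝ) - i) * lam) * ((n.choose i : ℝ) * dfall lam (1-lam) (n-i) * Saux S i (j'+1))
          = ((j':ℝ) + 2 - ((n:ℝ)+1) * lam) * ((n.choose i : ℝ) * dfall lam (1-lam) (n-i) * Saux S i (j'+1)) := by
        intro i _
        ring
      rw [Finset.sum_congr rfl hcomb, ← Finset.mul_sum, ih j', ih (j'+1)]
      rw [hrec (n+1) (j'+2)]
      simp only [Nat.add_sub_cancel, if_neg (Nat.succ_ne_zero (j'+1))]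
      push_cast
      ring
end


theorem stmt10 (lam : ℝ) (S : ℕ → ℕ → ℝ)
    (hS : ∀ (n : ℕ) (x : ℝ), dfall lam x n = ∑ k ∈ Finset.range (n + 1), S n k * dfall 1 x k)
    (phi : ℕ → ℝ → ℝ)
    (hphi : ∀ (n : ℕ) (x : ℝ), phi n x = ∑ k ∈ Finset.range (n + 1), S n k * x ^ k) (n : ℕ) (x : ℝ) :
    phi (n + 1) x = x * ∑ k ∈ Finset.range (n + 1),
      (n.choose k : ℝ) * dfall lam (1 - lam) (n - k) * phi k x := by
  have hrec := Saux_rec hS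
  have hS00 := Saux_zero_zero hS
  have phiext : ∀ k ∈ Finset.range (n+1),
      phi k x = ∑ j ∈ Finset.range (n+1), Saux S k j * x ^ j := by
    intro k hk
    have hkn : k + 1 ≤ n + 1 := Finset.mem_range.1 hk
    rw [hphi]
    rw [← Finset.sum_subset (Finset.range_subset_range.2 hkn)
      (fun j _ hj => by
        simp only [Finset.mem_range] at hj
        rw [Saux_eq_zero S (by omega), zero_mul])]
    refine Finset.sum_congr rfl fun j hj => ?_
    have hjk : j ≤ k := Nat.lt_succ_iff.1 (Finset.mem_range.1 hj)
    simp [Saux, hjk]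
  rw [hphi (n+1) x]
  have step0 : ∑ m ∈ Finset.range (n+2), S (n+1) m * x ^ m
      = ∑ m ∈ Finset.range (n+2), Saux S (n+1) m * x ^ m := by
    refine Finset.sum_congr rfl fun m hm => ?_
    have : m ≤ n + 1 := Nat.lt_succ_iff.1 (Finset.mem_range.1 hm)
    simp [Saux, this]
  rw [step0, Finset.sum_range_succ', Saux_col0 hrec, zero_mul, add_zero]
  calc ∑ j ∈ Finset.range (n+1), Saux S (n+1) (j+1) * x ^ (j+1)
      = ∑ j ∈ Finset.range (n+1),
          (∑ k ∈ Finset.range (n+1),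
            (n.choose k : ℝ) * dfall lam (1-lam) (n-k) * Saux S k j) * x ^ (j+1) := by
        refine Finset.sum_congr rfl fun j _ => ?_
        rw [keyT hS00 hrec n j]
    _ = ∑ j ∈ Finset.range (n+1), ∑ k ∈ Finset.range (n+1),
          (n.choose k : ℝ) * dfall lam (1-lam) (n-k) * Saux S k j * x ^ (j+1) := by
        refine Finset.sum_congr rfl fun j _ => ?_
        rw [Finset.sum_mul]
    _ = ∑ k ∈ Finset.range (n+1), ∑ j ∈ Finset.range (n+1),
          (n.choose k : ℝ) * dfall lam (1-lam) (n-k) * Saux S k j * x ^ (j+1) :=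
        Finset.sum_comm
    _ = x * ∑ k ∈ Finset.range (n+1),
          (n.choose k : ℝ) * dfall lam (1-lam) (n-k)
            * ∑ j ∈ Finset.range (n+1), Saux S k j * x ^ j := by
        rw [Finset.mul_sum]
        refine Finset.sum_congr rfl fun k _ => ?_
        rw [Finset.mul_sum, Finset.mul_sum]
        refine Finset.sum_congr rfl fun j _ => ?_
        ring
    _ = x * ∑ k ∈ Finset.range (n+1),
          (n.choose k : ℝ) * dfall lam (1-lam) (n-k) * phi k x := by
        congr 1
        refine Finset.sum_congr rfl fun k hk => ?_
        rw [phiext k hk]
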